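/- Let b > 1 be an integer and s = σ + it with σ > 0 real. Let c_m(s) (for complex argument) and c_m(σ) (for real argument) be defined by c_0 = 1 and, for m ≥ 1, c_m(z) = (1/(b^{m+z} − b)) ∑_{j=1}^{m} C(m,j) γ_{j,b} c_{m−j}(z). Then |c_m(s)| ≤ c_m(σ) for every integer m ≥ 0. -/

import Mathlib

open Finset

/-- γ_{j,b} = ∑_{a=1}^{b-1} a^j for a natural exponent j. -/
def gammaNat (b j : ℕ) : ℕ := ∑ a ∈ Finset.Ico 1 b, a ^ j

/-- The sequence c_m(s) for complex s: c_0 = 1 and, for m ≥ 1,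
c_m(s) = (1/(b^{m+s} − b)) ∑_{j=1}^{m} C(m,j) γ_{j,b} c_{m−j}(s). -/
noncomputable def cSeqC (b : ℕ) (s : ℂ) : ℕ → ℂ
  | 0 => 1
  | (m + 1) =>
      (1 / ((b : ℂ) ^ ((m : ℂ) + 1 + s) - (b : ℂ))) *
        ∑ j ∈ Finset.range (m + 1),
          (Nat.choose (m + 1) (j + 1) : ℂ) * (gammaNat b (j + 1) : ℂ) * cSeqC b s (m - j)
  decreasing_by exact Nat.lt_succ_of_le (Nat.sub_le m j)

/-- The sequence c_m(σ) for real σ: same recurrence, real-valued. -/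
noncomputable def cSeqR (b : ℕ) (σ : ℝ) : ℕ → ℝ
  | 0 => 1
  | (m + 1) =>
      (1 / ((b : ℝ) ^ ((m : ℝ) + 1 + σ) - (b : ℝ))) *
        ∑ j ∈ Finset.range (m + 1),
          (Nat.choose (m + 1) (j + 1) : ℝ) * (gammaNat b (j + 1) : ℝ) * cSeqR b σ (m - j)
  decreasing_by exact Nat.lt_succ_of_le (Nat.sub_le m j)

lemma denom_pos (b : ℕ) (hb : 1 < b) (σ : ℝ) (hσ : 0 < σ) (m : ℕ) :
    0 < (b : ℝ) ^ ((m : ℝ) + 1 + σ) - (b : ℝ) := by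
  have hb1 : (1 : ℝ) < (b : ℝ) := by exact_mod_cast hb
  have h : (b : ℝ) ^ (1 : ℝ) < (b : ℝ) ^ ((m : ℝ) + 1 + σ) := by
    apply (Real.rpow_lt_rpow_left_iff hb1).mpr
    have : (0:ℝ) ≤ (m:ℝ) := Nat.cast_nonneg m
    linarith
  rw [Real.rpow_one] at h
  linarith

lemma cSeqR_nonneg (b : ℕ) (hb : 1 < b) (σ : ℝ) (hσ : 0 < σ) (m : ℕ) :
    0 ≤ cSeqR b σ m := by
  induction m using Nat.strong_induction_on with
  | _ m ih =>
    match m with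
    | 0 => rw [cSeqR]; norm_num
    | (m + 1) =>
      rw [cSeqR]
      apply mul_nonneg
      · have := denom_pos b hb σ hσ m
        positivity
      · apply Finset.sum_nonneg
        intro j hj
        have := ih (m - j) (Nat.lt_succ_of_le (Nat.sub_le m j))
        positivity

/-- For s = σ + it with σ = Re s > 0: |c_m(s)| ≤ c_m(σ) for every m ≥ 0. -/
theorem cSeq_abs_le_real (b : ℕ) (hb : 1 < b) (s : ℂ) (hs : 0 < s.re) (m : ℕ) :
    ‖cSeqC b s m‖ ≤ cSeqR b s.re m := by
  induction m using Nat.strong_induction_on with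
  | _ m ih =>
    match m with
    | 0 => rw [cSeqC, cSeqR]; norm_num
    | (m + 1) =>
      rw [cSeqC, cSeqR]
      have hσ := hs
      have hDr : 0 < (b : ℝ) ^ ((m : ℝ) + 1 + s.re) - (b : ℝ) := denom_pos b hb s.re hs m
      have hb1 : (1 : ℝ) < (b : ℝ) := by exact_mod_cast hb
      have hnorm : (b : ℝ) ^ ((m : ℝ) + 1 + s.re) - (b : ℝ) ≤
          ‖(b : ℂ) ^ ((m : ℂ) + 1 + s) - (b : ℂ)‖ := by
        have h1 : ‖(b : ℂ) ^ ((m : ℂ) + 1 + s)‖ = (b : ℝ) ^ ((m : ℝ) + 1 + s.re) := by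
          have := Complex.norm_cpow_eq_rpow_re_of_pos (x := (b : ℝ))
            (by positivity) ((m : ℂ) + 1 + s)
          push_cast at this ⊢
          rw [this]
          norm_num
        calc (b : ℝ) ^ ((m : ℝ) + 1 + s.re) - (b : ℝ)
            = ‖(b : ℂ) ^ ((m : ℂ) + 1 + s)‖ - ‖(b : ℂ)‖ := by
              rw [h1]; simp
          _ ≤ ‖(b : ℂ) ^ ((m : ℂ) + 1 + s) - (b : ℂ)‖ := norm_sub_norm_le _ _
      rw [norm_mul, norm_div, norm_one]
      apply mul_le_mul
      · rw [one_div, one_div]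
        exact inv_anti₀ hDr hnorm
      · calc ‖∑ j ∈ Finset.range (m + 1),
              (Nat.choose (m + 1) (j + 1) : ℂ) * (gammaNat b (j + 1) : ℂ) * cSeqC b s (m - j)‖
            ≤ ∑ j ∈ Finset.range (m + 1),
              ‖(Nat.choose (m + 1) (j + 1) : ℂ) * (gammaNat b (j + 1) : ℂ) * cSeqC b s (m - j)‖ :=
              norm_sum_le _ _
          _ ≤ ∑ j ∈ Finset.range (m + 1),
              (Nat.choose (m + 1) (j + 1) : ℝ) * (gammaNat b (j + 1) : ℝ) * cSeqR b s.re (m - j) := by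
              apply Finset.sum_le_sum
              intro j hj
              rw [norm_mul, norm_mul]
              simp only [Complex.norm_natCast]
              apply mul_le_mul_of_nonneg_left
                (ih (m - j) (Nat.lt_succ_of_le (Nat.sub_le m j)))
              positivity
      · positivity
      · positivity
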